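/- arXiv:1804.04982 — 7 statements merged into one kernel-verified Lean document; each statement's English description precedes it below -/
import Mathlib

section
/- Let z₁, z₂, z₃ be pairwise distinct complex numbers with z₁ + z₂ + z₃ = 0, so that they are the roots of the depressed cubic x³ + g₂x + g₃ with g₂ = z₁z₂ + z₂z₃ + z₃z₁ and g₃ = −z₁z₂z₃. Set Δ = −4g₂³ − 27g₃². Then Δ ≠ 0 and j(z₁, z₂, z₃) = −4g₂³/Δ. -/
open Complex

/-- The j-invariant as a function of the cross-ratio. -/
noncomputable def Jfun (l : ℂ) : ℂ := 4 * (l ^ 2 - l + 1) ^ 3 / (27 * l ^ 2 * (l - 1) ^ 2)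

/-- The cross-ratio of four points of `ℂ`. -/
noncomputable def crossRatio (z1 z2 z3 z4 : ℂ) : ℂ :=
  ((z1 - z3) / (z2 - z3)) * ((z2 - z4) / (z1 - z4))

/-- The j-invariant of a quadruple of points of `ℂ`. -/
noncomputable def jInv4 (z1 z2 z3 z4 : ℂ) : ℂ := Jfun (crossRatio z1 z2 z3 z4)

/-- The j-invariant of a triple of points of `ℂ` (fourth point at infinity). -/
noncomputable def jInv3 (z1 z2 z3 : ℂ) : ℂ := Jfun ((z1 - z3) / (z2 - z3))

theorem jInv3_eq_discriminant_formula (z1 z2 z3 : ℂ)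
    (h12 : z1 ≠ z2) (h13 : z1 ≠ z3) (h23 : z2 ≠ z3)
    (hsum : z1 + z2 + z3 = 0)
    (g2 g3 Δ : ℂ)
    (hg2 : g2 = z1 * z2 + z2 * z3 + z3 * z1) (hg3 : g3 = -(z1 * z2 * z3))
    (hΔ : Δ = -4 * g2 ^ 3 - 27 * g3 ^ 2) :
    Δ ≠ 0 ∧ jInv3 z1 z2 z3 = -4 * g2 ^ 3 / Δ := by
  have d12 : z1 - z2 ≠ 0 := sub_ne_zero.mpr h12
  have d13 : z1 - z3 ≠ 0 := sub_ne_zero.mpr h13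
  have d23 : z2 - z3 ≠ 0 := sub_ne_zero.mpr h23
  have hz3 : z3 = -z1 - z2 := by linear_combination hsum
  have hΔf : Δ = ((z1 - z2) * (z1 - z3) * (z2 - z3)) ^ 2 := by
    subst hg2 hg3 hΔ
    rw [hz3]; ring
  have hΔne : Δ ≠ 0 := by
    rw [hΔf]
    exact pow_ne_zero _ (mul_ne_zero (mul_ne_zero d12 d13) d23)
  refine ⟨hΔne, ?_⟩
  set l : ℂ := (z1 - z3) / (z2 - z3) with hl
  have hlne : l ≠ 0 := div_ne_zero d13 d23
  have hl1 : l - 1 = (z1 - z2) / (z2 - z3) := by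
    rw [hl, div_sub_one d23]; congr 1; ring
  have hl1ne : l - 1 ≠ 0 := hl1 ▸ div_ne_zero d12 d23
  have hden : (27 : ℂ) * l ^ 2 * (l - 1) ^ 2 ≠ 0 :=
    mul_ne_zero (mul_ne_zero (by norm_num) (pow_ne_zero _ hlne)) (pow_ne_zero _ hl1ne)
  rw [jInv3, ← hl, Jfun, div_eq_div_iff hden hΔne, hΔf, hl1, hg2, hl]
  field_simp
  rw [hz3]; ring
end

section
/- Let z₁, z₂, z₃ be pairwise distinct complex numbers. There exist a, b ∈ ℂ such that the affine map f(z) = a·z + b cyclically permutes the three points (f(z₁) = z₂, f(z₂) = z₃, f(z₃) = z₁) if and only if j(z₁, z₂, z₃) = 0; i.e., the set {z₁,z₂,z₃} has a nontrivial symmetry of order 3 exactly when its j-invariant vanishes. -/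
open Complex

/-!
An affine map `z ↦ a z + b` cycling `z₁ ↦ z₂ ↦ z₃ ↦ z₁` multiplies the edge vectors
`u = z₁ - z₂`, `v = z₂ - z₃`, `w = z₃ - z₁` cyclically by `a`, which forces `v² = u w`; since
`u + v + w = 0` this is the equilateral-triangle relation `u² + u v + v² = 0`, and conversely that
relation makes `a = v / u` work. With `λ = (u + v) / v` one has `λ² - λ + 1 = (u² + u v + v²) / v²`,
and for `λ ∉ {0, 1}` the j-invariant vanishes exactly when its numerator `λ² - λ + 1` does.
-/

theorem Jfun_eq_zero_iff {l : ℂ} (hl0 : l ≠ 0) (hl1 : l ≠ 1) :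
    Jfun l = 0 ↔ l ^ 2 - l + 1 = 0 := by
  have hden : (27 : ℂ) * l ^ 2 * (l - 1) ^ 2 ≠ 0 :=
    mul_ne_zero (mul_ne_zero (by norm_num) (pow_ne_zero 2 hl0))
      (pow_ne_zero 2 (sub_ne_zero.mpr hl1))
  simp [Jfun, hden]

theorem exists_affine_cycle_iff {K : Type*} [Field K] {z1 z2 z3 : K} (h12 : z1 ≠ z2) :
    (∃ a b : K, a * z1 + b = z2 ∧ a * z2 + b = z3 ∧ a * z3 + b = z1) ↔
      (z1 - z2) ^ 2 + (z1 - z2) * (z2 - z3) + (z2 - z3) ^ 2 = 0 := by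
  constructor
  · rintro ⟨a, b, h1, h2, h3⟩
    linear_combination (z1 - z2) * (h2 - h3) - (z2 - z3) * (h1 - h2)
  · intro hequi
    have hu : z1 - z2 ≠ 0 := sub_ne_zero.mpr h12
    refine ⟨(z2 - z3) / (z1 - z2), z2 - (z2 - z3) / (z1 - z2) * z1, by ring, ?_, ?_⟩
    · field_simp
      ring
    · field_simp
      linear_combination -hequi

theorem order_three_symmetry_iff_jInv3_eq_zero (z1 z2 z3 : ℂ)
    (h12 : z1 ≠ z2) (h13 : z1 ≠ z3) (h23 : z2 ≠ z3) :
    (∃ a b : ℂ, a * z1 + b = z2 ∧ a * z2 + b = z3 ∧ a * z3 + b = z1) ↔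
      jInv3 z1 z2 z3 = 0 := by
  have hv : z2 - z3 ≠ 0 := sub_ne_zero.mpr h23
  have hl0 : (z1 - z3) / (z2 - z3) ≠ 0 := div_ne_zero (sub_ne_zero.mpr h13) hv
  have hl1 : (z1 - z3) / (z2 - z3) ≠ 1 := by
    rw [Ne, div_eq_one_iff_eq hv, sub_left_inj]
    exact h12
  have hnum : ((z1 - z3) / (z2 - z3)) ^ 2 - (z1 - z3) / (z2 - z3) + 1 =
      ((z1 - z2) ^ 2 + (z1 - z2) * (z2 - z3) + (z2 - z3) ^ 2) / (z2 - z3) ^ 2 := by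
    field_simp
    ring
  rw [exists_affine_cycle_iff h12, jInv3, Jfun_eq_zero_iff hl0 hl1, hnum,
    div_eq_zero_iff, or_iff_left (pow_ne_zero 2 hv)]
end

section
/- Let z₁, z₂, z₃ be pairwise distinct complex numbers. There exist a, b ∈ ℂ and a labeling {i,j,k} = {1,2,3} with i ≠ j such that the affine map f(z) = a·z + b satisfies f(z_i) = z_j, f(z_j) = z_i and f(z_k) = z_k (a nontrivial symmetry of order 2 of the set {z₁,z₂,z₃}) if and only if j(z₁, z₂, z₃) = 1. -/
open Complex

theorem order_two_symmetry_iff_jInv3_eq_one (z1 z2 z3 : ℂ)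
    (h12 : z1 ≠ z2) (h13 : z1 ≠ z3) (h23 : z2 ≠ z3) :
    (∃ a b : ℂ,
        (a * z1 + b = z2 ∧ a * z2 + b = z1 ∧ a * z3 + b = z3) ∨
        (a * z2 + b = z3 ∧ a * z3 + b = z2 ∧ a * z1 + b = z1) ∨
        (a * z1 + b = z3 ∧ a * z3 + b = z1 ∧ a * z2 + b = z2)) ↔
      jInv3 z1 z2 z3 = 1 := by
  have h23' : z2 - z3 ≠ 0 := sub_ne_zero.mpr h23
  have h13' : z1 - z3 ≠ 0 := sub_ne_zero.mpr h13
  have h12' : z1 - z2 ≠ 0 := sub_ne_zero.mpr h12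
  set l : ℂ := (z1 - z3) / (z2 - z3) with hl
  have hrel : z1 - z3 = l * (z2 - z3) := by
    rw [hl]; field_simp
  have hl0 : l ≠ 0 := by
    intro h; rw [h, zero_mul] at hrel; exact h13' hrel
  have hl1 : l ≠ 1 := by
    intro h; rw [h, one_mul] at hrel
    exact h12' (by linear_combination hrel)
  have hjl : jInv3 z1 z2 z3 = Jfun l := rfl
  rw [hjl]
  constructor
  · rintro ⟨a, b, ⟨e1, e2, e3⟩ | ⟨e1, e2, e3⟩ | ⟨e1, e2, e3⟩⟩
    · have ha : a = -1 := by
        have h : (a + 1) * (z1 - z2) = 0 := by linear_combination e1 - e2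
        rcases mul_eq_zero.mp h with h | h
        · linear_combination h
        · exact absurd h h12'
      subst ha
      have hmid : z1 + z2 = 2 * z3 := by linear_combination e3 - e1
      have hlv : l = -1 := by
        rw [hl, div_eq_iff h23']; linear_combination hmid
      rw [hlv]; unfold Jfun; norm_num
    · have ha : a = -1 := by
        have h : (a + 1) * (z2 - z3) = 0 := by linear_combination e1 - e2
        rcases mul_eq_zero.mp h with h | h
        · linear_combination h
        · exact absurd h h23'
      subst ha
      have hmid : z2 + z3 = 2 * z1 := by linear_combination e3 - e1
      have hlv : l = 1 / 2 := by
        rw [hl, div_eq_div_iff h23' (two_ne_zero)]; linear_combination -hmid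
      rw [hlv]; unfold Jfun; norm_num
    · have ha : a = -1 := by
        have h : (a + 1) * (z1 - z3) = 0 := by linear_combination e1 - e2
        rcases mul_eq_zero.mp h with h | h
        · linear_combination h
        · exact absurd h h13'
      subst ha
      have hmid : z1 + z3 = 2 * z2 := by linear_combination e3 - e1
      have hlv : l = 2 := by
        rw [hl, div_eq_iff h23']; linear_combination hmid
      rw [hlv]; unfold Jfun; norm_num
  · intro hJ
    unfold Jfun at hJ
    have hden : 27 * l ^ 2 * (l - 1) ^ 2 ≠ 0 := by
      apply mul_ne_zero (mul_ne_zero (by norm_num) (pow_ne_zero _ hl0))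
      exact pow_ne_zero _ (sub_ne_zero.mpr hl1)
    rw [div_eq_one_iff_eq hden] at hJ
    have hfac : ((l + 1) * (2 * l - 1) * (l - 2)) ^ 2 = 0 := by linear_combination hJ
    have := pow_eq_zero_iff (n := 2) (by norm_num) |>.mp hfac
    rcases mul_eq_zero.mp this with h | h
    · rcases mul_eq_zero.mp h with h | h
      · -- l = -1 : swap z1 z2 fix z3
        have hlv : l = -1 := by linear_combination h
        rw [hlv] at hrel
        exact ⟨-1, z1 + z2, Or.inl ⟨by ring, by ring, by linear_combination hrel⟩⟩
      · -- l = 1/2 : swap z2 z3 fix z1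
        have hlv : l = 1 / 2 := by linear_combination h / 2
        rw [hlv] at hrel
        exact ⟨-1, z2 + z3, Or.inr (Or.inl ⟨by ring, by ring, by linear_combination -2 * hrel⟩)⟩
    · -- l = 2 : swap z1 z3 fix z2
      have hlv : l = 2 := by linear_combination h
      rw [hlv] at hrel
      exact ⟨-1, z1 + z3, Or.inr (Or.inr ⟨by ring, by ring, by linear_combination hrel⟩)⟩
end

section
/- Let z₁, z₂, z₃ be pairwise distinct complex numbers. The points z₁, z₂, z₃ form an isosceles (non-degenerate) triangle — i.e., they are not collinear and at least two of the three distances |z₁−z₂|, |z₂−z₃|, |z₃−z₁| are equal — if and only if j(z₁, z₂, z₃) is real and j(z₁, z₂, z₃) < 1. -/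
/-!
Write `λ = (z₁ - z₃)/(z₂ - z₃)`, the image of `z₁` under the similarity sending `z₃ ↦ 0`,
`z₂ ↦ 1`. The triangle is isosceles iff `λ ∉ ℝ` and one of `|λ| = |λ - 1|`, `|λ| = 1`,
`|λ - 1| = 1` holds. The j-function satisfies `j(λ) - 1 = w² / 27` with
`w = 2λ - 1 - 2/λ - 2/(λ - 1)`, so `j` is real and `< 1` iff `w` is purely imaginary and
nonzero. With `p = |λ|²`, `q = |λ - 1|²` one finds `Re w = (p - q)(p - 1)(q - 1)/(pq)` and
`Im w = 2 Im λ · (1 + 1/p + 1/q)`, which vanish exactly on the three circles/lines above and on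
the real axis respectively.
-/

open Complex

def IsIsoscelesTriangle (z1 z2 z3 : ℂ) : Prop :=
  ((z3 - z1) / (z2 - z1)).im ≠ 0 ∧
    (‖z1 - z2‖ = ‖z2 - z3‖ ∨ ‖z2 - z3‖ = ‖z3 - z1‖ ∨ ‖z3 - z1‖ = ‖z1 - z2‖)

theorem isIsoscelesTriangle_sub_div_iff {z1 z2 z3 : ℂ} (c : ℂ) {d : ℂ} (hd : d ≠ 0) :
    IsIsoscelesTriangle ((z1 - c) / d) ((z2 - c) / d) ((z3 - c) / d) ↔
      IsIsoscelesTriangle z1 z2 z3 := by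
  have hsub (z w : ℂ) : (z - c) / d - (w - c) / d = (z - w) / d := by ring
  have hnorm : ‖d‖ ≠ 0 := norm_ne_zero_iff.mpr hd
  simp only [IsIsoscelesTriangle, hsub, div_div_div_cancel_right₀ hd, norm_div,
    div_left_inj' hnorm]

theorem isIsoscelesTriangle_zero_one_iff (l : ℂ) :
    IsIsoscelesTriangle l 1 0 ↔ l.im ≠ 0 ∧ (‖l‖ = ‖l - 1‖ ∨ ‖l‖ = 1 ∨ ‖l - 1‖ = 1) := by
  have him : ((0 - l) / (1 - l)).im = -l.im / normSq (l - 1) := by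
    rw [zero_sub, neg_div, ← div_neg, neg_sub, div_im]
    simp only [sub_re, sub_im, one_re, one_im]
    ring
  have him_of_normSq : normSq (l - 1) = 0 → l.im = 0 := fun h => by
    simp [sub_eq_zero.mp (normSq_eq_zero.mp h)]
  rw [IsIsoscelesTriangle, him]
  simp only [ne_eq, div_eq_zero_iff, neg_eq_zero, sub_zero, norm_one, zero_sub, norm_neg]
  rw [or_iff_left_of_imp him_of_normSq, eq_comm (a := (1 : ℝ))]
  tauto

-- `27 (Jfun l - 1) = ((l + 1) (2l - 1) (l - 2) / (l (l - 1)))²`, and that quotient expands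
-- to `jRoot l`.
noncomputable def jRoot (l : ℂ) : ℂ := 2 * l - 1 - 2 / l - 2 / (l - 1)

theorem Jfun_eq_one_add_jRoot_sq {l : ℂ} (h0 : l ≠ 0) (h1 : l ≠ 1) :
    Jfun l = 1 + jRoot l ^ 2 / 27 := by
  have h1' : l - 1 ≠ 0 := sub_ne_zero.mpr h1
  rw [Jfun, jRoot]
  field_simp
  ring

theorem normSq_sub_normSq_sub_one (l : ℂ) : normSq l - normSq (l - 1) = 2 * l.re - 1 := by
  simp only [normSq_apply, sub_re, sub_im, one_re, one_im]
  ring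

theorem jRoot_re {l : ℂ} (h0 : l ≠ 0) (h1 : l ≠ 1) :
    (jRoot l).re = (normSq l - normSq (l - 1)) * (normSq l - 1) * (normSq (l - 1) - 1)
      / (normSq l * normSq (l - 1)) := by
  have hp : normSq l ≠ 0 := normSq_eq_zero.not.mpr h0
  have hq : normSq (l - 1) ≠ 0 := normSq_eq_zero.not.mpr (sub_ne_zero.mpr h1)
  simp only [jRoot, sub_re, mul_re, div_eq_mul_inv, inv_re, one_re, re_ofNat, im_ofNat,
    zero_mul, sub_zero]
  field_simp
  linear_combination (1 - (normSq l - 1) * (normSq (l - 1) - 1)) * normSq_sub_normSq_sub_one l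

theorem jRoot_im (l : ℂ) :
    (jRoot l).im = 2 * l.im * (1 + 1 / normSq l + 1 / normSq (l - 1)) := by
  simp only [jRoot, sub_im, mul_im, div_eq_mul_inv, inv_im, one_im, re_ofNat, im_ofNat]
  ring

theorem sq_im_eq_zero_and_sq_re_neg_iff (w : ℂ) :
    (w ^ 2).im = 0 ∧ (w ^ 2).re < 0 ↔ w.re = 0 ∧ w.im ≠ 0 := by
  rw [sq, mul_re, mul_im]
  constructor
  · rintro ⟨him, hre⟩
    rcases mul_eq_zero.mp (show w.re * w.im = 0 by linarith) with h | h
    · exact ⟨h, fun h' => by simp [h, h'] at hre⟩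
    · rw [h] at hre
      nlinarith [sq_nonneg w.re]
  · rintro ⟨hre, him⟩
    simp only [hre, zero_mul, mul_zero, add_zero, zero_sub, true_and, Left.neg_neg_iff]
    exact mul_self_pos.mpr him

theorem Jfun_im_eq_zero_and_re_lt_one_iff {l : ℂ} (h0 : l ≠ 0) (h1 : l ≠ 1) :
    (Jfun l).im = 0 ∧ (Jfun l).re < 1 ↔
      l.im ≠ 0 ∧ (‖l‖ = ‖l - 1‖ ∨ ‖l‖ = 1 ∨ ‖l - 1‖ = 1) := by
  have hp : 0 < normSq l := normSq_pos.mpr h0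
  have hq : 0 < normSq (l - 1) := normSq_pos.mpr (sub_ne_zero.mpr h1)
  have hre : (jRoot l).re = 0 ↔ ‖l‖ = ‖l - 1‖ ∨ ‖l‖ = 1 ∨ ‖l - 1‖ = 1 := by
    rw [jRoot_re h0 h1, div_eq_zero_iff, or_iff_left (mul_pos hp hq).ne', mul_eq_zero,
      mul_eq_zero, sub_eq_zero, sub_eq_zero, sub_eq_zero, normSq_eq_norm_sq,
      normSq_eq_norm_sq, pow_left_inj₀ (norm_nonneg _) (norm_nonneg _) two_ne_zero,
      pow_eq_one_iff_of_nonneg (norm_nonneg _) two_ne_zero,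
      pow_eq_one_iff_of_nonneg (norm_nonneg _) two_ne_zero, or_assoc]
  have him : (jRoot l).im ≠ 0 ↔ l.im ≠ 0 := by
    have hpos : 0 < 1 + 1 / normSq l + 1 / normSq (l - 1) := by positivity
    rw [jRoot_im]
    exact ⟨fun h hy => h (by simp [hy]),
      fun hy => mul_ne_zero (mul_ne_zero two_ne_zero hy) hpos.ne'⟩
  have hJ : (Jfun l).im = 0 ∧ (Jfun l).re < 1 ↔ (jRoot l ^ 2).im = 0 ∧ (jRoot l ^ 2).re < 0 := by
    simp only [Jfun_eq_one_add_jRoot_sq h0 h1, add_im, one_im, div_ofNat_im, zero_add,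
      div_eq_zero_iff, add_re, one_re, div_ofNat_re, OfNat.ofNat_ne_zero, or_false,
      add_lt_iff_neg_left, div_lt_iff₀ (by norm_num : (0 : ℝ) < 27), zero_mul]
  rw [hJ, sq_im_eq_zero_and_sq_re_neg_iff, and_comm, hre, him]

theorem isosceles_iff_jInv3_real_lt_one (z1 z2 z3 : ℂ)
    (h12 : z1 ≠ z2) (h13 : z1 ≠ z3) (h23 : z2 ≠ z3) :
    (((z3 - z1) / (z2 - z1)).im ≠ 0 ∧
        (‖z1 - z2‖ = ‖z2 - z3‖ ∨
         ‖z2 - z3‖ = ‖z3 - z1‖ ∨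
         ‖z3 - z1‖ = ‖z1 - z2‖)) ↔
      ((jInv3 z1 z2 z3).im = 0 ∧ (jInv3 z1 z2 z3).re < 1) := by
  have hd : z2 - z3 ≠ 0 := sub_ne_zero.mpr h23
  have hl0 : (z1 - z3) / (z2 - z3) ≠ 0 := div_ne_zero (sub_ne_zero.mpr h13) hd
  have hl1 : (z1 - z3) / (z2 - z3) ≠ 1 := fun h =>
    h12 (sub_left_injective ((div_eq_one_iff_eq hd).mp h))
  change IsIsoscelesTriangle z1 z2 z3 ↔ _
  rw [← isIsoscelesTriangle_sub_div_iff z3 hd, div_self hd, sub_self, zero_div,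
    isIsoscelesTriangle_zero_one_iff, jInv3, Jfun_im_eq_zero_and_re_lt_one_iff hl0 hl1]
end

section
/- Let z₁, z₂, z₃ be pairwise distinct complex numbers. If j(z₁, z₂, z₃) is not real, then the three side lengths |z₁−z₂|, |z₂−z₃|, |z₃−z₁| are pairwise distinct; i.e., the points form a triangle whose side lengths are pairwise different. -/
open Complex

/-!
`Jfun` is invariant under the anharmonic group `l ↦ 1 - l, l⁻¹, l / (l - 1)` and commutes with
complex conjugation. With `l = (z₁ - z₃) / (z₂ - z₃)`, the three side lengths are proportional to
`‖l - 1‖`, `1`, `‖l‖`, and each possible equality of two sides (`‖l - 1‖ = 1`, `‖l‖ = 1`,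
`‖l‖ = ‖l - 1‖`) puts `conj l` in the orbit of `l`, so that `conj (Jfun l) = Jfun l`.
-/

open ComplexConjugate

lemma Jfun_conj (l : ℂ) : Jfun (conj l) = conj (Jfun l) := by
  simp [Jfun, map_ofNat]

lemma Jfun_one_sub (l : ℂ) : Jfun (1 - l) = Jfun l := by
  unfold Jfun
  ring

/- `Jfun_inv` and `Jfun_div_sub_one` hold for every `l`: at `l = 0, 1` both sides vanish,
since `x / 0 = 0`. -/
lemma Jfun_inv (l : ℂ) : Jfun l⁻¹ = Jfun l := by
  rcases eq_or_ne l 0 with rfl | h0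
  · simp
  rcases eq_or_ne l 1 with rfl | h1
  · simp
  have hl1 : l - 1 ≠ 0 := sub_ne_zero.mpr h1
  unfold Jfun
  field_simp
  ring

lemma Jfun_div_sub_one (l : ℂ) : Jfun (l / (l - 1)) = Jfun l := by
  rcases eq_or_ne l 0 with rfl | h0
  · simp
  rcases eq_or_ne l 1 with rfl | h1
  · simp [Jfun]
  have hl1 : l - 1 ≠ 0 := sub_ne_zero.mpr h1
  unfold Jfun
  field_simp
  ring

lemma Jfun_im_eq_zero_of_Jfun_conj_eq {l : ℂ} (h : Jfun (conj l) = Jfun l) :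
    (Jfun l).im = 0 := by
  rw [← conj_eq_iff_im, ← Jfun_conj, h]

lemma conj_eq_div_sub_one_of_norm_sub_one_eq_one {l : ℂ} (h : ‖l - 1‖ = 1) :
    conj l = l / (l - 1) := by
  have hl : l - 1 ≠ 0 := norm_ne_zero_iff.mp (h ▸ one_ne_zero)
  have hinv : conj (l - 1) = (l - 1)⁻¹ := (inv_eq_conj h).symm
  rw [map_sub, map_one] at hinv
  rw [eq_add_of_sub_eq hinv]
  field_simp
  ring

lemma conj_eq_one_sub_of_norm_eq_norm_sub_one {l : ℂ} (h : ‖l‖ = ‖l - 1‖) :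
    conj l = 1 - l := by
  have hre : l.re = 1 / 2 := by
    have := congrArg (· ^ 2) h
    simp only [Complex.sq_norm, normSq_apply, sub_re, sub_im, one_re, one_im] at this
    linarith
  apply Complex.ext
  · rw [conj_re, sub_re, one_re, hre]
    norm_num
  · simp

lemma Jfun_im_eq_zero_of_norm_eq_one {l : ℂ} (h : ‖l‖ = 1) : (Jfun l).im = 0 :=
  Jfun_im_eq_zero_of_Jfun_conj_eq (by rw [← inv_eq_conj h, Jfun_inv])

lemma Jfun_im_eq_zero_of_norm_sub_one_eq_one {l : ℂ} (h : ‖l - 1‖ = 1) : (Jfun l).im = 0 :=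
  Jfun_im_eq_zero_of_Jfun_conj_eq
    (by rw [conj_eq_div_sub_one_of_norm_sub_one_eq_one h, Jfun_div_sub_one])

lemma Jfun_im_eq_zero_of_norm_eq_norm_sub_one {l : ℂ} (h : ‖l‖ = ‖l - 1‖) :
    (Jfun l).im = 0 :=
  Jfun_im_eq_zero_of_Jfun_conj_eq
    (by rw [conj_eq_one_sub_of_norm_eq_norm_sub_one h, Jfun_one_sub])

theorem sides_pairwise_distinct_of_jInv3_not_real_general (z1 z2 z3 : ℂ)
    (h23 : z2 ≠ z3)
    (him : (jInv3 z1 z2 z3).im ≠ 0) :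
    ‖z1 - z2‖ ≠ ‖z2 - z3‖ ∧
    ‖z2 - z3‖ ≠ ‖z3 - z1‖ ∧
    ‖z3 - z1‖ ≠ ‖z1 - z2‖ := by
  set l := (z1 - z3) / (z2 - z3)
  have hw : ‖z2 - z3‖ ≠ 0 := norm_ne_zero_iff.mpr (sub_ne_zero.mpr h23)
  have hl : ‖l‖ = ‖z3 - z1‖ / ‖z2 - z3‖ := by rw [norm_div, norm_sub_rev]
  have hl1 : ‖l - 1‖ = ‖z1 - z2‖ / ‖z2 - z3‖ := by
    rw [div_sub_one (sub_ne_zero.mpr h23), sub_sub_sub_cancel_right, norm_div]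
  refine ⟨fun h => him ?_, fun h => him ?_, fun h => him ?_⟩
  · exact Jfun_im_eq_zero_of_norm_sub_one_eq_one (by rw [hl1, h, div_self hw])
  · exact Jfun_im_eq_zero_of_norm_eq_one (by rw [hl, ← h, div_self hw])
  · exact Jfun_im_eq_zero_of_norm_eq_norm_sub_one (by rw [hl, hl1, h])

theorem sides_pairwise_distinct_of_jInv3_not_real (z1 z2 z3 : ℂ)
    (h12 : z1 ≠ z2) (h13 : z1 ≠ z3) (h23 : z2 ≠ z3)
    (him : (jInv3 z1 z2 z3).im ≠ 0) :
    ‖z1 - z2‖ ≠ ‖z2 - z3‖ ∧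
    ‖z2 - z3‖ ≠ ‖z3 - z1‖ ∧
    ‖z3 - z1‖ ≠ ‖z1 - z2‖ :=
  sides_pairwise_distinct_of_jInv3_not_real_general z1 z2 z3 h23 him
end

section
/- Let z₁, z₂, z₃ be pairwise distinct complex numbers. Then one of the points is the arithmetic mean of the other two (z₁ + z₂ = 2z₃, or z₂ + z₃ = 2z₁, or z₃ + z₁ = 2z₂) if and only if j(z₁, z₂, z₃) = 1. -/
open Complex

theorem mean_iff_jInv3_eq_one (z1 z2 z3 : ℂ)
    (h12 : z1 ≠ z2) (h13 : z1 ≠ z3) (h23 : z2 ≠ z3) :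
    (z1 + z2 = 2 * z3 ∨ z2 + z3 = 2 * z1 ∨ z3 + z1 = 2 * z2) ↔
      jInv3 z1 z2 z3 = 1 := by
  have hd : z2 - z3 ≠ 0 := sub_ne_zero.mpr h23
  have hn : z1 - z3 ≠ 0 := sub_ne_zero.mpr h13
  set l : ℂ := (z1 - z3) / (z2 - z3) with hl
  clear_value l
  have hl0 : l ≠ 0 := hl ▸ div_ne_zero hn hd
  have hl1 : l ≠ 1 := by
    rw [hl, Ne, div_eq_one_iff_eq hd]
    intro h
    exact h12 (by linear_combination h)
  have hden : 27 * l ^ 2 * (l - 1) ^ 2 ≠ 0 := by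
    apply mul_ne_zero (mul_ne_zero (by norm_num) (pow_ne_zero _ hl0))
    exact pow_ne_zero _ (sub_ne_zero.mpr hl1)
  have key : jInv3 z1 z2 z3 = 1 ↔ (l + 1) * (2 * l - 1) * (l - 2) = 0 := by
    rw [jInv3, Jfun, ← hl, div_eq_one_iff_eq hden]
    constructor
    · intro h
      have : ((l + 1) * (2 * l - 1) * (l - 2)) ^ 2 = 0 := by linear_combination h
      exact pow_eq_zero_iff (n := 2) (by norm_num) |>.mp this
    · intro h
      linear_combination ((l + 1) * (2 * l - 1) * (l - 2)) * h
  rw [key, mul_eq_zero, mul_eq_zero]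
  have e1 : l + 1 = 0 ↔ z1 + z2 = 2 * z3 := by
    rw [hl, div_add' _ _ _ hd, div_eq_zero_iff]
    constructor
    · rintro (h | h)
      · linear_combination h
      · exact absurd h hd
    · intro h; left; linear_combination h
  have e2 : 2 * l - 1 = 0 ↔ z2 + z3 = 2 * z1 := by
    rw [hl]
    constructor
    · intro h
      have : 2 * (z1 - z3) - (z2 - z3) = 0 := by
        have := mul_eq_zero_of_left h (z2 - z3)
        field_simp at this
        linear_combination this
      linear_combination -this
    · intro h
      field_simp
      linear_combination -h
  have e3 : l - 2 = 0 ↔ z3 + z1 = 2 * z2 := by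
    rw [hl]
    constructor
    · intro h
      have : (z1 - z3) - 2 * (z2 - z3) = 0 := by
        have := mul_eq_zero_of_left h (z2 - z3)
        field_simp at this
        linear_combination this
      linear_combination this
    · intro h
      have h2 : z1 - z3 = 2 * (z2 - z3) := by linear_combination h
      field_simp
      linear_combination h2
  rw [e1, e2, e3]
  tauto
end

section
/- Let z₁, z₂, z₃ be pairwise distinct complex numbers. Then j(z₁, z₂, z₃) is real if and only if there exist a, b ∈ ℂ with a ≠ 0 such that the anti-holomorphic affine map z ↦ a·conj(z) + b carries the set {z₁, z₂, z₃} onto itself; i.e., the j-invariant is real exactly when the triple has a mirror symmetry. -/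
open Complex

/-!
Conjugation conjugates the j-invariant, so `j(z₁, z₂, z₃)` is real iff the conjugate triple has
the same j-invariant as the triple. Now `Jfun m = Jfun l` forces `m` into the anharmonic orbit
`l, 1 - l, 1/l, 1/(1 - l), l/(l - 1), (l - 1)/l`, whose members are exactly the ratios
`(x - z)/(y - z)` of the reorderings of a triple with ratio `l`; and equal ratios mean the two
triples differ by a complex affine map. Hence two triples of distinct points have the same
j-invariant iff a map `z ↦ a z + b` carries one onto the other as sets, and composing such a map
with conjugation is the mirror symmetry.
-/

open ComplexConjugate

lemma Jfun_cross_mul_sub_eq (l m : ℂ) :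
    4 * (m ^ 2 - m + 1) ^ 3 * (27 * l ^ 2 * (l - 1) ^ 2)
        - 4 * (l ^ 2 - l + 1) ^ 3 * (27 * m ^ 2 * (m - 1) ^ 2) =
      -108 * ((m - l) * (m - (1 - l)) * (l * m - 1) * ((1 - l) * m - 1)
        * ((l - 1) * m - l) * (l * m - (l - 1))) := by
  ring

lemma Jfun_denom_ne_zero {l : ℂ} (h0 : l ≠ 0) (h1 : l ≠ 1) : 27 * l ^ 2 * (l - 1) ^ 2 ≠ 0 := by
  have : l - 1 ≠ 0 := sub_ne_zero.mpr h1
  simp_all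

lemma eq_anharmonic_of_Jfun_eq {l m : ℂ} (hl0 : l ≠ 0) (hl1 : l ≠ 1) (hm0 : m ≠ 0)
    (hm1 : m ≠ 1) (h : Jfun m = Jfun l) :
    m = l ∨ m = 1 - l ∨ m = l⁻¹ ∨ m = (1 - l)⁻¹ ∨ m = l / (l - 1) ∨ m = (l - 1) / l := by
  have hl1' : l - 1 ≠ 0 := sub_ne_zero.mpr hl1
  rw [Jfun, Jfun, div_eq_div_iff (Jfun_denom_ne_zero hm0 hm1) (Jfun_denom_ne_zero hl0 hl1),
    ← sub_eq_zero, Jfun_cross_mul_sub_eq] at h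
  simp only [mul_eq_zero, sub_eq_zero, neg_eq_zero, OfNat.ofNat_ne_zero, false_or] at h
  rcases h with ((((h | h) | h) | h) | h) | h
  · exact .inl h
  · exact .inr <| .inl h
  · exact .inr <| .inr <| .inl <| eq_inv_of_mul_eq_one_right h
  · exact .inr <| .inr <| .inr <| .inl <| eq_inv_of_mul_eq_one_right h
  · exact .inr <| .inr <| .inr <| .inr <| .inl <| by rw [eq_div_iff hl1', mul_comm, h]
  · exact .inr <| .inr <| .inr <| .inr <| .inr <| by rw [eq_div_iff hl0, mul_comm, h]

lemma jInv3_conj (u v w : ℂ) : jInv3 (conj u) (conj v) (conj w) = conj (jInv3 u v w) := by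
  rw [jInv3, jInv3, ← map_sub, ← map_sub, ← map_div₀, Jfun_conj]

lemma jInv3_affine {a : ℂ} (ha : a ≠ 0) (b u v w : ℂ) :
    jInv3 (a * u + b) (a * v + b) (a * w + b) = jInv3 u v w := by
  rw [jInv3, jInv3, add_sub_add_right_eq_sub, add_sub_add_right_eq_sub, ← mul_sub, ← mul_sub,
    mul_div_mul_left _ _ ha]

lemma jInv3_swap12 (u v w : ℂ) : jInv3 v u w = jInv3 u v w := by
  rw [jInv3, jInv3, ← inv_div, Jfun_inv]

lemma jInv3_swap23 (u v w : ℂ) : jInv3 u w v = jInv3 u v w := by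
  rcases eq_or_ne v w with rfl | hvw
  · rfl
  rw [jInv3, jInv3, ← Jfun_one_sub ((u - w) / (v - w))]
  congr 1
  field_simp
  ring

lemma jInv3_eq_of_insert_eq {u v w u' v' w' : ℂ} (huv : u ≠ v) (huw : u ≠ w) (hvw : v ≠ w)
    (h : ({u, v, w} : Set ℂ) = {u', v', w'}) : jInv3 u v w = jInv3 u' v' w' := by
  have hu : u ∈ ({u', v', w'} : Set ℂ) := h ▸ by simp
  have hv : v ∈ ({u', v', w'} : Set ℂ) := h ▸ by simp
  have hw : w ∈ ({u', v', w'} : Set ℂ) := h ▸ by simp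
  simp only [Set.mem_insert_iff, Set.mem_singleton_iff] at hu hv hw
  clear h
  -- `simp` uses the two swaps as permutation rewrites, sorting the arguments on both sides.
  rcases hu with rfl | rfl | rfl <;> rcases hv with rfl | rfl | rfl <;>
    rcases hw with rfl | rfl | rfl <;> simp_all [jInv3_swap12, jInv3_swap23]

lemma exists_affine_of_div_eq {u v w u' v' w' : ℂ} (hvw : v ≠ w) (hvw' : v' ≠ w')
    (h : (u' - w') / (v' - w') = (u - w) / (v - w)) :
    ∃ a b : ℂ, a ≠ 0 ∧ a * u + b = u' ∧ a * v + b = v' ∧ a * w + b = w' := by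
  have hvw₀ : v - w ≠ 0 := sub_ne_zero.mpr hvw
  have hvw₀' : v' - w' ≠ 0 := sub_ne_zero.mpr hvw'
  rw [div_eq_div_iff hvw₀' hvw₀] at h
  refine ⟨(v' - w') / (v - w), w' - (v' - w') / (v - w) * w,
    div_ne_zero hvw₀' hvw₀, ?_, by field_simp; ring, by ring⟩
  field_simp
  linear_combination -h

lemma exists_reorder_of_jInv3_eq {u v w u' v' w' : ℂ} (huv : u ≠ v) (huw : u ≠ w) (hvw : v ≠ w)
    (huv' : u' ≠ v') (huw' : u' ≠ w') (hvw' : v' ≠ w') (h : jInv3 u' v' w' = jInv3 u v w) :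
    ∃ x y z : ℂ, ({x, y, z} : Set ℂ) = {u, v, w} ∧ y ≠ z ∧
      (u' - w') / (v' - w') = (x - z) / (y - z) := by
  have ratio_ne_zero {p q r : ℂ} (hpr : p ≠ r) (hqr : q ≠ r) : (p - r) / (q - r) ≠ 0 :=
    div_ne_zero (sub_ne_zero.mpr hpr) (sub_ne_zero.mpr hqr)
  have ratio_ne_one {p q r : ℂ} (hpq : p ≠ q) (hqr : q ≠ r) : (p - r) / (q - r) ≠ 1 :=
    fun h ↦ hpq <| by simpa using (div_eq_one_iff_eq (sub_ne_zero.mpr hqr)).mp h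
  have one_sub_ratio : 1 - (u - w) / (v - w) = (v - u) / (v - w) := by field_simp; ring
  have ratio_sub_one : (u - w) / (v - w) - 1 = (u - v) / (v - w) := by field_simp; ring
  rcases eq_anharmonic_of_Jfun_eq (ratio_ne_zero huw hvw) (ratio_ne_one huv hvw)
    (ratio_ne_zero huw' hvw') (ratio_ne_one huv' hvw') h with h | h | h | h | h | h <;>
    simp only [h, one_sub_ratio, ratio_sub_one]
  · exact ⟨u, v, w, rfl, hvw, rfl⟩
  · exact ⟨u, w, v, by rw [Set.pair_comm], hvw.symm, by field_simp; ring⟩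
  · exact ⟨v, u, w, Set.insert_comm v u {w}, huw, by rw [inv_div]⟩
  · exact ⟨w, u, v, by rw [Set.insert_comm w, Set.pair_comm w], huv,
      by field_simp; ring⟩
  · exact ⟨w, v, u, by rw [Set.insert_comm w, Set.pair_comm w, Set.insert_comm v], huv.symm,
      by field_simp; ring⟩
  · exact ⟨v, w, u, by rw [Set.pair_comm w, Set.insert_comm v], huw.symm,
      by field_simp; ring⟩

theorem jInv3_eq_iff_exists_affine_image {u v w u' v' w' : ℂ} (huv : u ≠ v) (huw : u ≠ w)
    (hvw : v ≠ w) (huv' : u' ≠ v') (huw' : u' ≠ w') (hvw' : v' ≠ w') :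
    jInv3 u v w = jInv3 u' v' w' ↔
      ∃ a b : ℂ, a ≠ 0 ∧ (fun z ↦ a * z + b) '' ({u, v, w} : Set ℂ) = {u', v', w'} := by
  constructor
  · intro h
    obtain ⟨x, y, z, hxyz, hyz, hratio⟩ :=
      exists_reorder_of_jInv3_eq huv huw hvw huv' huw' hvw' h.symm
    obtain ⟨a, b, ha, rfl, rfl, rfl⟩ := exists_affine_of_div_eq hyz hvw' hratio
    refine ⟨a, b, ha, ?_⟩
    rw [← hxyz]
    simp only [Set.image_insert_eq, Set.image_singleton]
  · rintro ⟨a, b, ha, hab⟩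
    simp only [Set.image_insert_eq, Set.image_singleton] at hab
    rw [jInv3_eq_of_insert_eq huv' huw' hvw' hab.symm, jInv3_affine ha]

theorem jInv3_real_iff_mirror_symmetry (z1 z2 z3 : ℂ)
    (h12 : z1 ≠ z2) (h13 : z1 ≠ z3) (h23 : z2 ≠ z3) :
    (jInv3 z1 z2 z3).im = 0 ↔
      ∃ a b : ℂ, a ≠ 0 ∧
        (fun z => a * (starRingEnd ℂ) z + b) '' ({z1, z2, z3} : Set ℂ) =
          ({z1, z2, z3} : Set ℂ) := by
  have hconj : conj '' ({z1, z2, z3} : Set ℂ) = {conj z1, conj z2, conj z3} := by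
    simp only [Set.image_insert_eq, Set.image_singleton]
  have hinj := (starRingEnd ℂ).injective
  rw [← conj_eq_iff_im, ← jInv3_conj, jInv3_eq_iff_exists_affine_image (hinj.ne h12)
    (hinj.ne h13) (hinj.ne h23) h12 h13 h23, ← hconj]
  simp only [Set.image_image]
end
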